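/- For any k ≥ 1 and m ≥ 3 with k ≤ m-2, there exist three polygonal curves σ, τ, υ of complexity m in ℝ (namely σ all zeros, τ = (0, ε, ..., ε, 0), υ = (0, ε, 0, ..., 0) for ε > 0) such that d_kDTW(σ,τ) = k·ε, d_kDTW(σ,υ) = ε, and d_kDTW(υ,τ) = 0; hence the factor k in the relaxed triangle inequality d_kDTW(σ,τ) ≤ k·(d_kDTW(σ,υ) + d_kDTW(υ,τ)) is tight. -/

import Mathlib

open List

/-- A (monotone) traversal of two curves with `m'` and `m''` vertices:
a sequence of (0-based) index pairs starting at `(0,0)`, ending at `(m'-1, m''-1)`,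
where each pair is followed by one that increments at least one index by one. -/
def IsTraversal (m' m'' : ℕ) (T : List (ℕ × ℕ)) : Prop :=
  T ≠ [] ∧ T.head? = some (0, 0) ∧ T.getLast? = some (m' - 1, m'' - 1) ∧
  (∀ p ∈ T, p.1 < m' ∧ p.2 < m'') ∧
  T.Chain' (fun a b => b = (a.1 + 1, a.2) ∨ b = (a.1, a.2 + 1) ∨ b = (a.1 + 1, a.2 + 1))

/-- Sum of the `k` largest entries of a list of reals (zero-padded if the list is shorter). -/
noncomputable def topkSum (k : ℕ) (l : List ℝ) : ℝ :=
  ((l.insertionSort (· ≥ ·)).take k).sum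

/-- The list of matched distances of a traversal. -/
def matchedDists {E : Type*} [PseudoMetricSpace E] (σ τ : ℕ → E) (T : List (ℕ × ℕ)) :
    List ℝ :=
  T.map fun p => dist (σ p.1) (τ p.2)

/-- The `k`-DTW distance of curves `σ` (complexity `m'`) and `τ` (complexity `m''`). -/
noncomputable def kDTW {E : Type*} [PseudoMetricSpace E] (k : ℕ) (σ τ : ℕ → E)
    (m' m'' : ℕ) : ℝ :=
  sInf {x | ∃ T, IsTraversal m' m'' T ∧ x = topkSum k (matchedDists σ τ T)}

/-- The DTW distance. -/
noncomputable def DTW {E : Type*} [PseudoMetricSpace E] (σ τ : ℕ → E) (m' m'' : ℕ) : ℝ :=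
  sInf {x | ∃ T, IsTraversal m' m'' T ∧ x = (matchedDists σ τ T).sum}

/-- The discrete Fréchet distance. -/
noncomputable def discreteFrechet {E : Type*} [PseudoMetricSpace E] (σ τ : ℕ → E)
    (m' m'' : ℕ) : ℝ :=
  sInf {x | ∃ T, IsTraversal m' m'' T ∧ x = (matchedDists σ τ T).foldr max 0}

/-!
All three curves take values in `{0, ε}`, so the sorted matched distances of a traversal are a
block of `ε`'s followed by `0`'s, and the top-`k` sum is `min k (#ε) * ε`. A traversal visits
every vertex of its second curve, so against the zero curve it meets each of the `m - 2` interior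
vertices of `τ`, respectively the spike of `υ`, at distance `ε`; the diagonal traversal attains
both bounds. Against `τ`, the traversal that holds the spike of `υ` along the whole plateau of `τ`
matches equal values only.
-/

theorem insertionSort_ge_eq_replicate {a : ℝ} (ha : 0 < a) {l : List ℝ}
    (hl : ∀ x ∈ l, x = 0 ∨ x = a) :
    l.insertionSort (· ≥ ·) = replicate (l.count a) a ++ replicate (l.count 0) 0 := by
  refine Perm.eq_of_pairwise' (pairwise_insertionSort _ l) ?_ ((perm_insertionSort _ l).trans ?_)
  · rw [pairwise_append]
    refine ⟨pairwise_replicate.mpr (Or.inr le_rfl), pairwise_replicate.mpr (Or.inr le_rfl), ?_⟩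
    intro x hx y hy
    rw [eq_of_mem_replicate hx, eq_of_mem_replicate hy]
    exact ha.le
  · rw [perm_iff_count]
    intro x
    rw [count_append, count_replicate, count_replicate]
    rcases eq_or_ne x a with rfl | hxa
    · simp [ha.ne]
    rcases eq_or_ne x 0 with rfl | hx0
    · simp [ha.ne']
    have hxl : x ∉ l := fun hx => (hl x hx).elim hx0 hxa
    simp [count_eq_zero.mpr hxl, Ne.symm hx0, Ne.symm hxa]

theorem topkSum_eq_min_count_mul {a : ℝ} (ha : 0 < a) (k : ℕ) {l : List ℝ}
    (hl : ∀ x ∈ l, x = 0 ∨ x = a) :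
    topkSum k l = min k (l.count a) * a := by
  rw [topkSum, insertionSort_ge_eq_replicate ha hl, take_append, take_replicate, take_replicate,
    sum_append, sum_replicate, sum_replicate, smul_zero, add_zero, nsmul_eq_mul, Nat.cast_min]

theorem topkSum_nonneg (k : ℕ) {l : List ℝ} (hl : ∀ x ∈ l, 0 ≤ x) : 0 ≤ topkSum k l :=
  sum_nonneg fun x hx => hl x ((mem_insertionSort _).mp (mem_of_mem_take hx))

theorem topkSum_eq_zero (k : ℕ) {l : List ℝ} (hl : ∀ x ∈ l, x = 0) : topkSum k l = 0 :=
  sum_eq_zero fun x hx => hl x ((mem_insertionSort _).mp (mem_of_mem_take hx))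

theorem isTraversal_map_range {m' m'' n : ℕ} (f : ℕ → ℕ × ℕ) (hn : 0 < n)
    (h0 : f 0 = (0, 0)) (hlast : f (n - 1) = (m' - 1, m'' - 1))
    (hlt : ∀ i < n, (f i).1 < m' ∧ (f i).2 < m'')
    (hstep : ∀ i, i + 1 < n → f (i + 1) = ((f i).1 + 1, (f i).2) ∨
      f (i + 1) = ((f i).1, (f i).2 + 1) ∨ f (i + 1) = ((f i).1 + 1, (f i).2 + 1)) :
    IsTraversal m' m'' ((range n).map f) := by
  obtain ⟨n, rfl⟩ : ∃ n', n = n' + 1 := ⟨n - 1, by omega⟩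
  refine ⟨by simp, by simp [range_succ_eq_map, h0], ?_, ?_, ?_⟩
  · simpa [getLast?_eq_getElem?] using hlast
  · simpa using hlt
  · rw [Chain', isChain_map, isChain_range_succ]
    exact fun i hi => hstep i (by omega)

theorem mem_of_isChain_eq_or_succ {L : List ℕ} (hc : L.IsChain fun a b => b = a ∨ b = a + 1)
    {x y j : ℕ} (hx : L.head? = some x) (hy : L.getLast? = some y) (hxj : x ≤ j) (hjy : j ≤ y) :
    j ∈ L := by
  induction L generalizing x with
  | nil => simp at hx
  | cons a L ih =>
    simp only [head?_cons, Option.some.injEq] at hx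
    subst hx
    rcases Nat.lt_or_eq_of_le hxj with hlt | rfl
    · cases L with
      | nil => simp at hy; omega
      | cons b L =>
        rw [isChain_cons_cons] at hc
        rw [getLast?_cons_cons] at hy
        exact mem_cons_of_mem _ (ih hc.2 rfl hy (by omega))
    · exact mem_cons_self

theorem IsTraversal.mem_map_snd {m' m'' : ℕ} {T : List (ℕ × ℕ)} (hT : IsTraversal m' m'' T)
    {j : ℕ} (hj : j < m'') : j ∈ T.map Prod.snd := by
  obtain ⟨-, hhead, hlast, -, hchain⟩ := hT
  refine mem_of_isChain_eq_or_succ (y := m'' - 1) ?_ (by simp [hhead]) (by simp [hlast])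
    (Nat.zero_le j) (by omega)
  rw [isChain_map]
  refine hchain.imp fun a b h => ?_
  rcases h with rfl | rfl | rfl <;> simp

section

variable {E : Type*} [PseudoMetricSpace E] {σ τ : ℕ → E} {m' m'' : ℕ}

theorem IsTraversal.card_le_count_matchedDists {T : List (ℕ × ℕ)} (hT : IsTraversal m' m'' T)
    {a : ℝ} {S : Finset ℕ} (hS : ∀ j ∈ S, j < m'')
    (hdist : ∀ i, ∀ j ∈ S, dist (σ i) (τ j) = a) :
    S.card ≤ (matchedDists σ τ T).count a := by
  have hsub : S ⊆ ((T.filter fun p => p.2 ∈ S).map Prod.snd).toFinset := by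
    intro j hj
    obtain ⟨p, hp, rfl⟩ := List.mem_map.mp (hT.mem_map_snd (hS j hj))
    simpa using ⟨⟨p.1, hp⟩, hj⟩
  calc S.card ≤ (T.filter fun p => p.2 ∈ S).length :=
        (Finset.card_le_card hsub).trans ((toFinset_card_le _).trans (length_map _).le)
    _ = T.countP fun p => p.2 ∈ S := (countP_eq_length_filter ..).symm
    _ ≤ T.countP fun p => dist (σ p.1) (τ p.2) = a :=
        countP_mono_left fun p _ hp => by simpa using hdist p.1 p.2 (by simpa using hp)
    _ = (matchedDists σ τ T).count a := by
        rw [matchedDists, count_eq_countP, countP_map]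
        exact countP_congr fun p _ => by simp

theorem kDTW_eq_of_forall_le {k : ℕ} {c : ℝ}
    (hle : ∀ T, IsTraversal m' m'' T → c ≤ topkSum k (matchedDists σ τ T))
    {T₀ : List (ℕ × ℕ)} (hT₀ : IsTraversal m' m'' T₀) (hc : topkSum k (matchedDists σ τ T₀) = c) :
    kDTW k σ τ m' m'' = c :=
  IsLeast.csInf_eq ⟨⟨T₀, hT₀, hc.symm⟩, by rintro _ ⟨T, hT, rfl⟩; exact hle T hT⟩

theorem kDTW_eq_zero_of_isTraversal (k : ℕ) {T : List (ℕ × ℕ)} (hT : IsTraversal m' m'' T)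
    (hzero : ∀ p ∈ T, dist (σ p.1) (τ p.2) = 0) : kDTW k σ τ m' m'' = 0 :=
  kDTW_eq_of_forall_le (fun _ _ => topkSum_nonneg k <| forall_mem_map.mpr fun _ _ => dist_nonneg)
    hT (topkSum_eq_zero k <| forall_mem_map.mpr hzero)

end

theorem Real.dist_eq_zero_or_eq {a x y : ℝ} (ha : 0 ≤ a) (hx : x = 0 ∨ x = a)
    (hy : y = 0 ∨ y = a) : dist x y = 0 ∨ dist x y = a := by
  rcases hx with rfl | rfl <;> rcases hy with rfl | rfl <;> simp [Real.dist_eq, abs_of_nonneg ha]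

theorem topkSum_matchedDists_eq {a : ℝ} (ha : 0 < a) (k : ℕ) {σ τ : ℕ → ℝ}
    (hσ : ∀ i, σ i = 0 ∨ σ i = a) (hτ : ∀ j, τ j = 0 ∨ τ j = a) (T : List (ℕ × ℕ)) :
    topkSum k (matchedDists σ τ T) = min k ((matchedDists σ τ T).count a) * a :=
  topkSum_eq_min_count_mul ha k <|
    forall_mem_map.mpr fun p _ => Real.dist_eq_zero_or_eq ha.le (hσ p.1) (hτ p.2)

def plateau (m : ℕ) (ε : ℝ) : ℕ → ℝ := fun j => if j = 0 ∨ j = m - 1 then 0 else ε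

def spike (ε : ℝ) : ℕ → ℝ := fun j => if j = 1 then ε else 0

theorem plateau_eq_zero_or_eq (m : ℕ) (ε : ℝ) (j : ℕ) :
    plateau m ε j = 0 ∨ plateau m ε j = ε := by
  unfold plateau; split_ifs <;> simp

theorem spike_eq_zero_or_eq (ε : ℝ) (j : ℕ) : spike ε j = 0 ∨ spike ε j = ε := by
  unfold spike; split_ifs <;> simp

theorem isTraversal_diagonal {m : ℕ} (hm : 0 < m) :
    IsTraversal m m ((range m).map fun i => (i, i)) :=
  isTraversal_map_range _ hm rfl rfl (fun _ hi => ⟨hi, hi⟩) fun _ _ => Or.inr (Or.inr rfl)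

/-- The path `(0,0), (1,1), …, (1,m-2), (2,m-1), …, (m-1,m-1)` of length `2m - 3`. -/
def spikePlateauPath (m : ℕ) (i : ℕ) : ℕ × ℕ :=
  if i = 0 then (0, 0) else if i ≤ m - 2 then (1, i) else (i - (m - 3), m - 1)

theorem isTraversal_spikePlateauPath {m : ℕ} (hm : 3 ≤ m) :
    IsTraversal m m ((range (2 * m - 3)).map (spikePlateauPath m)) := by
  refine isTraversal_map_range _ (by omega) rfl ?_ ?_ ?_ <;> unfold spikePlateauPath
  · rw [if_neg (by omega), if_neg (by omega)]
    congr 1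
    omega
  · intro i hi
    split_ifs <;> simp <;> omega
  · intro i hi
    split_ifs <;> simp <;> omega

theorem kDTW_zero_plateau {m k : ℕ} (hm : 0 < m) (hkm : k ≤ m - 2) {ε : ℝ} (hε : 0 < ε) :
    kDTW k (fun _ => 0) (plateau m ε) m m = k * ε := by
  have hvalue : ∀ T, IsTraversal m m T →
      topkSum k (matchedDists (fun _ => 0) (plateau m ε) T) = k * ε := by
    intro T hT
    have hcount := hT.card_le_count_matchedDists (σ := fun _ => (0 : ℝ)) (τ := plateau m ε)
      (a := ε) (S := Finset.Ioo 0 (m - 1)) (fun j hj => by simp at hj; omega)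
      (fun _ j hj => by
        simp only [Finset.mem_Ioo] at hj
        simp [plateau, Real.dist_eq, abs_of_pos hε, show ¬(j = 0 ∨ j = m - 1) by omega])
    rw [Nat.card_Ioo] at hcount
    rw [topkSum_matchedDists_eq hε k (fun _ => Or.inl rfl) (plateau_eq_zero_or_eq m ε),
      min_eq_left (by omega)]
  exact kDTW_eq_of_forall_le (fun T hT => (hvalue T hT).ge) (isTraversal_diagonal hm)
    (hvalue _ (isTraversal_diagonal hm))

theorem kDTW_zero_spike {m k : ℕ} (hm : 2 ≤ m) (hk : 1 ≤ k) {ε : ℝ} (hε : 0 < ε) :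
    kDTW k (fun _ => 0) (spike ε) m m = ε := by
  have hformula := topkSum_matchedDists_eq hε k (fun _ => Or.inl rfl) (spike_eq_zero_or_eq ε)
  refine kDTW_eq_of_forall_le (fun T hT => ?_) (isTraversal_diagonal (by omega)) ?_
  · have hcount := hT.card_le_count_matchedDists (σ := fun _ => (0 : ℝ)) (τ := spike ε)
      (a := ε) (S := {1}) (by simp; omega) (by simp [spike, Real.dist_eq, abs_of_pos hε])
    rw [hformula]
    exact le_mul_of_one_le_left hε.le (by exact_mod_cast le_min hk (by simpa using hcount))
  · have hdiag : (matchedDists (fun _ => 0) (spike ε) ((range m).map fun i => (i, i))).count ε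
        = (range m).count 1 := by
      rw [matchedDists, map_map, count_eq_countP, countP_map, count_eq_countP]
      refine countP_congr fun i _ => ?_
      by_cases h : i = 1 <;> simp [spike, h, abs_of_pos hε, hε.ne]
    rw [hformula, hdiag, count_range, if_pos (by omega)]
    simp [hk]

theorem kDTW_spike_plateau (k : ℕ) {m : ℕ} (hm : 3 ≤ m) (ε : ℝ) :
    kDTW k (spike ε) (plateau m ε) m m = 0 := by
  refine kDTW_eq_zero_of_isTraversal k (isTraversal_spikePlateauPath hm) ?_
  simp only [mem_map, mem_range, forall_exists_index, and_imp]
  rintro _ i hi rfl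
  unfold spikePlateauPath
  split_ifs <;> simp [spike, plateau] <;> omega

/-- tightness of the factor `k` in the relaxed triangle inequality,
witnessed by the curves `σ = (0,…,0)`, `τ = (0,ε,…,ε,0)`, `υ = (0,ε,0,…,0)` in `ℝ`. -/
theorem kDTW_triangle_tight (m k : ℕ) (hm : 3 ≤ m) (hk : 1 ≤ k) (hkm : k ≤ m - 2)
    (ε : ℝ) (hε : 0 < ε) :
    let σ : ℕ → ℝ := fun _ => 0
    let τ : ℕ → ℝ := fun j => if j = 0 ∨ j = m - 1 then 0 else ε
    let υ : ℕ → ℝ := fun j => if j = 1 then ε else 0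
    kDTW k σ τ m m = (k : ℝ) * ε ∧
    kDTW k σ υ m m = ε ∧
    kDTW k υ τ m m = 0 ∧
    kDTW k σ τ m m = (k : ℝ) * (kDTW k σ υ m m + kDTW k υ τ m m) := by
  intro σ τ υ
  have hστ : kDTW k σ τ m m = k * ε := kDTW_zero_plateau (by omega) hkm hε
  have hσυ : kDTW k σ υ m m = ε := kDTW_zero_spike (by omega) hk hε
  have hυτ : kDTW k υ τ m m = 0 := kDTW_spike_plateau k hm ε
  refine ⟨hστ, hσυ, hυτ, ?_⟩
  rw [hστ, hσυ, hυτ, add_zero]
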